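/- Assume gcd(l, r−1) = 1 and [l]_{r−1} ≥ 2, and let κ be the unique integer with 1 ≤ κ ≤ l−1 and κ·(l−(r−1)) ≡ 1 (mod l). Then κ > ν = ⌊l/(r−1)⌋, the point n^(κ) = (1/l)(κ,…,κ,1) lies in σ0 ∩ N but not in the junior simplex s_G, and n^(κ) cannot be written as a linear combination with nonnegative integer coefficients of elements of s_G ∩ N. -/

import Mathlib

/-!
Write `s = r - 1`. The congruence `κ (l - s) ≡ 1 (mod l)` says `κ s + 1 = M l`; here `M ≠ 1`, since
`l = κ s + 1` would give `l ≡ 1 (mod s)`. Hence `M ≥ 2`, which gives `κ > ⌊l / s⌋`, and the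
coordinates of `n⁽ᵏ⁾` sum to `M ≠ 1`.

A lattice point of the junior simplex is `w / l` with `w ≥ 0`, `∑ wᵢ = l` and the first `s`
coordinates `wᵢ` all congruent mod `l`; lying in `[0, l)`, they are equal. So `w_r = 1` would give
`s w₁ + 1 = l`, impossible again. Thus `l` times the last coordinate of a point of `s_G ∩ N` lies in
the additive monoid `ℕ ∖ {1}`, and so does that of any `ℕ`-combination of such points, while
`l · n⁽ᵏ⁾_r = 1`.
-/

noncomputable section

/-- the generator `(1/l)(1,…,1,l−(r−1))` of the lattice of weights -/
def wgt (l r : ℕ) : Fin r → ℚ :=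
  fun i => (if (i : ℕ) + 1 = r then (l : ℚ) - ((r : ℚ) - 1) else 1) / l

/-- membership in the lattice `N = ℤ^r + ℤ·(1/l)(1,…,1,l−(r−1))` -/
def memN (l r : ℕ) (v : Fin r → ℚ) : Prop :=
  ∃ (a : Fin r → ℤ) (c : ℤ), v = (fun i => (a i : ℚ)) + c • wgt l r

/-- the point `n⁽ᵏ⁾ = (1/l)(κ,…,κ,1)` (since `[κ(l−(r−1))]_l = 1`) -/
def nK (l r κ : ℕ) : Fin r → ℚ :=
  fun i => (if (i : ℕ) + 1 = r then 1 else (κ : ℚ)) / l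

open Finset

lemma mul_add_one_ne_of_two_le_mod {l s : ℕ} (hmod : 2 ≤ l % s) (z : ℤ) :
    z * s + 1 ≠ l := by
  intro h
  have hl : ((l % s : ℕ) : ℤ) = ((1 % s : ℕ) : ℤ) := by
    rw [Int.natCast_mod, ← h, Int.mul_add_emod_self_right, Int.natCast_mod, Nat.cast_one]
  have := Nat.mod_le 1 s
  omega

lemma two_le_of_two_le_mod {l s : ℕ} (hmod : 2 ≤ l % s) : 2 ≤ l :=
  hmod.trans (Nat.mod_le l s)

lemma cast_ne_zero_of_two_le_mod {l s : ℕ} (hmod : 2 ≤ l % s) : (l : ℚ) ≠ 0 := by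
  have := two_le_of_two_le_mod hmod
  norm_cast
  omega

lemma dvd_mul_add_one_of_mul_sub_mod_eq_one {l s κ : ℕ} (hs : s ≤ l)
    (hκ : κ * (l - s) % l = 1) : l ∣ κ * s + 1 := by
  have hdiv := Nat.div_add_mod (κ * (l - s)) l
  have hsplit : κ * (l - s) + κ * s = l * κ := by
    rw [← mul_add, Nat.sub_add_cancel hs, mul_comm]
  exact (Nat.dvd_add_right (dvd_mul_right l (κ * (l - s) / l))).mp ⟨κ, by omega⟩

lemma two_mul_le_of_dvd {l n : ℕ} (hdvd : l ∣ n) (h0 : n ≠ 0) (hl : n ≠ l) : 2 * l ≤ n := by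
  obtain ⟨M, rfl⟩ := hdvd
  have : 2 ≤ M := by
    rcases M with _ | _ | M <;> simp_all
  nlinarith

lemma lt_mul_of_mul_sub_mod_eq_one {l s κ : ℕ} (hs : s ≤ l) (hmod : 2 ≤ l % s)
    (hκ : κ * (l - s) % l = 1) : l < κ * s := by
  have hl := two_le_of_two_le_mod hmod
  have hne : κ * s + 1 ≠ l := fun h => mul_add_one_ne_of_two_le_mod hmod κ (by exact_mod_cast h)
  have := two_mul_le_of_dvd (dvd_mul_add_one_of_mul_sub_mod_eq_one hs hκ) (by omega) hne
  omega

def natNeOne : AddSubmonoid ℕ where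
  carrier := {n | n ≠ 1}
  add_mem' := by simp only [Set.mem_ofPred_eq]; omega
  zero_mem' := zero_ne_one

section Coordinates

variable (l s κ : ℕ)

@[simp] lemma wgt_castSucc (i : Fin s) : wgt l (s + 1) i.castSucc = 1 / l := by
  simp [wgt, i.isLt.ne]

@[simp] lemma wgt_last : wgt l (s + 1) (Fin.last s) = (l - s) / l := by
  simp [wgt]

@[simp] lemma nK_castSucc (i : Fin s) : nK l (s + 1) κ i.castSucc = κ / l := by
  simp [nK, i.isLt.ne]

@[simp] lemma nK_last : nK l (s + 1) κ (Fin.last s) = 1 / l := by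
  simp [nK]

end Coordinates

lemma memN.exists_num {l s : ℕ} (hl : l ≠ 0) {v : Fin (s + 1) → ℚ} (hv : memN l (s + 1) v) :
    ∃ (w : Fin (s + 1) → ℤ) (c : ℤ),
      (∀ i, v i = w i / l) ∧ ∀ i : Fin s, w i.castSucc ≡ c [ZMOD l] := by
  obtain ⟨a, c, rfl⟩ := hv
  refine ⟨Fin.lastCases (a (Fin.last s) * l + c * (l - s)) (fun i => a i.castSucc * l + c), c,
    fun i => ?_, fun i => by simp⟩
  induction i using Fin.lastCases <;>
    simp only [Pi.add_apply, zsmul_eq_mul, Pi.mul_apply, Pi.intCast_apply, wgt_last, wgt_castSucc,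
      Fin.lastCases_last, Fin.lastCases_castSucc, Int.cast_add, Int.cast_mul, Int.cast_natCast,
      Int.cast_sub] <;>
    field_simp

def IsJuniorLatticePoint (l r : ℕ) (v : Fin r → ℚ) : Prop :=
  memN l r v ∧ (∀ i, 0 ≤ v i) ∧ ∑ i, v i = 1

lemma IsJuniorLatticePoint.mul_last_mem {l s : ℕ} (hmod : 2 ≤ l % s) {v : Fin (s + 1) → ℚ}
    (hv : IsJuniorLatticePoint l (s + 1) v) :
    l * v (Fin.last s) ∈ natNeOne.map (Nat.castAddMonoidHom ℚ) := by
  obtain ⟨hN, hpos, hsum⟩ := hv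
  have hl := cast_ne_zero_of_two_le_mod hmod
  obtain ⟨w, c, hvw, hwc⟩ := hN.exists_num (by exact_mod_cast hl)
  have hw : ∀ i, l * v i = w i := fun i => by rw [hvw]; field_simp
  have hw0 : ∀ i, 0 ≤ w i := fun i => by
    have := mul_nonneg (Nat.cast_nonneg l) (hpos i)
    rw [hw] at this
    exact_mod_cast this
  have hwsum : ∑ i, w i = l := by
    have : ∑ i, (w i : ℚ) = l := by simp_rw [← hw, ← mul_sum, hsum, mul_one]
    exact_mod_cast this
  refine ⟨(w (Fin.last s)).toNat, fun hw1 => ?_, ?_⟩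
  · rw [Fin.sum_univ_castSucc] at hwsum
    have hlt : ∀ i : Fin s, w i.castSucc < l := fun i => by
      have := single_le_sum (fun j _ => hw0 (Fin.castSucc j)) (mem_univ i)
      omega
    have hconst : ∀ i : Fin s, w i.castSucc = c % l := fun i => by
      rw [← Int.emod_eq_of_lt (hw0 _) (hlt i)]
      exact hwc i
    simp only [hconst, sum_const, card_univ, Fintype.card_fin, nsmul_eq_mul'] at hwsum
    exact mul_add_one_ne_of_two_le_mod hmod (c % l) (by omega)
  · rw [Nat.coe_castAddMonoidHom, hw]
    exact_mod_cast Int.toNat_of_nonneg (hw0 _)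

lemma nK_nonneg (l r κ : ℕ) (i : Fin r) : 0 ≤ nK l r κ i := by
  unfold nK
  split_ifs <;> positivity

lemma sum_nK (l s κ : ℕ) : ∑ i, nK l (s + 1) κ i = (κ * s + 1 : ℕ) / l := by
  simp only [Fin.sum_univ_castSucc, nK_castSucc, sum_const, card_univ, Fintype.card_fin,
    nsmul_eq_mul, nK_last, Nat.cast_add, Nat.cast_mul, Nat.cast_one]
  ring

lemma sum_nK_ne_one {l s : ℕ} (hmod : 2 ≤ l % s) (κ : ℕ) : ∑ i, nK l (s + 1) κ i ≠ 1 := by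
  have hl := cast_ne_zero_of_two_le_mod hmod
  rw [Ne, sum_nK, div_eq_one_iff_eq hl]
  exact_mod_cast mul_add_one_ne_of_two_le_mod hmod κ

lemma memN_nK {l s κ : ℕ} (hs : s ≤ l) (hl : l ≠ 0) (hκ : κ * (l - s) % l = 1) :
    memN l (s + 1) (nK l (s + 1) κ) := by
  obtain ⟨q, hq⟩ : ∃ q, l * q + 1 = κ * (l - s) := ⟨_, hκ ▸ Nat.div_add_mod (κ * (l - s)) l⟩
  refine ⟨Fin.lastCases (-q) 0, κ, funext fun i => ?_⟩
  induction i using Fin.lastCases with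
  | last =>
    simp only [nK_last, one_div, zsmul_eq_mul, Int.cast_natCast, Pi.add_apply, Fin.lastCases_last,
      Int.cast_neg, Pi.mul_apply, Pi.natCast_apply, wgt_last]
    field_simp
    rw [← Nat.cast_sub hs]
    have hqQ : (l * q + 1 : ℚ) = κ * (l - s : ℕ) := by exact_mod_cast hq
    linarith
  | cast i => simp [div_eq_mul_inv]

lemma not_exists_sum_nsmul_eq_nK {l s : ℕ} (hmod : 2 ≤ l % s) (κ : ℕ) :
    ¬ ∃ (t : Finset (Fin (s + 1) → ℚ)) (c : (Fin (s + 1) → ℚ) → ℕ),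
        (∀ v ∈ t, IsJuniorLatticePoint l (s + 1) v) ∧
        nK l (s + 1) κ = ∑ v ∈ t, (c v : ℚ) • v := by
  rintro ⟨t, c, ht, hsum⟩
  have hl := cast_ne_zero_of_two_le_mod hmod
  have hlast : ∑ v ∈ t, c v • (l * v (Fin.last s)) = 1 := by
    have := congrFun hsum (Fin.last s)
    simp only [nK_last, Finset.sum_apply, Pi.smul_apply, smul_eq_mul] at this
    simp only [nsmul_eq_mul, mul_left_comm _ (l : ℚ), ← mul_sum, ← this]
    field_simp
  obtain ⟨m, hm1, hm⟩ : ∑ v ∈ t, c v • (l * v (Fin.last s)) ∈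
      natNeOne.map (Nat.castAddMonoidHom ℚ) :=
    sum_mem fun v hv => nsmul_mem ((ht v hv).mul_last_mem hmod) _
  rw [Nat.coe_castAddMonoidHom, hlast] at hm
  exact hm1 (by exact_mod_cast hm)

theorem obstruction_point_general (l r : ℕ) (hr : 2 ≤ r) (hl : r ≤ l)
    (hmod : 2 ≤ l % (r - 1))
    (κ : ℕ)
    (hκ : (κ * (l - (r - 1))) % l = 1) :
    l / (r - 1) < κ ∧
    memN l r (nK l r κ) ∧
    (∀ i, 0 ≤ nK l r κ i) ∧
    (∑ i, nK l r κ i ≠ 1) ∧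
    ¬ ∃ (t : Finset (Fin r → ℚ)) (c : (Fin r → ℚ) → ℕ),
        (∀ v ∈ t, memN l r v ∧ (∀ i, 0 ≤ v i) ∧ ∑ i, v i = 1) ∧
        nK l r κ = ∑ v ∈ t, (c v : ℚ) • v := by
  obtain ⟨s, rfl⟩ : ∃ s, r = s + 1 := ⟨r - 1, by omega⟩
  rw [Nat.add_sub_cancel] at hmod hκ ⊢
  exact ⟨(Nat.div_lt_iff_lt_mul (by omega)).mpr (lt_mul_of_mul_sub_mod_eq_one (by omega) hmod hκ),
    memN_nK (by omega) (by omega) hκ, nK_nonneg l _ κ, sum_nK_ne_one hmod κ,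
    not_exists_sum_nsmul_eq_nK hmod κ⟩

/-- Assume `gcd(l, r−1) = 1` and `[l]_{r−1} ≥ 2`, and let `κ` be the unique
integer with `1 ≤ κ ≤ l−1` and `κ·(l−(r−1)) ≡ 1 (mod l)`.  Then `κ > ⌊l/(r−1)⌋`,
the point `n⁽ᵏ⁾ = (1/l)(κ,…,κ,1)` lies in `σ0 ∩ N` but not in the junior
simplex, and it is not a nonnegative-integer combination of lattice points of
the junior simplex. -/
theorem obstruction_point (l r : ℕ) (hr : 2 ≤ r) (hl : r ≤ l)
    (hgcd : Nat.gcd l (r - 1) = 1) (hmod : 2 ≤ l % (r - 1))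
    (κ : ℕ) (hκ1 : 1 ≤ κ) (hκ2 : κ ≤ l - 1)
    (hκ : (κ * (l - (r - 1))) % l = 1) :
    l / (r - 1) < κ ∧
    memN l r (nK l r κ) ∧
    (∀ i, 0 ≤ nK l r κ i) ∧
    (∑ i, nK l r κ i ≠ 1) ∧
    ¬ ∃ (t : Finset (Fin r → ℚ)) (c : (Fin r → ℚ) → ℕ),
        (∀ v ∈ t, memN l r v ∧ (∀ i, 0 ≤ v i) ∧ ∑ i, v i = 1) ∧
        nK l r κ = ∑ v ∈ t, (c v : ℚ) • v :=
  obstruction_point_general l r hr hl hmod κ hκ
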